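/- arXiv:1710.06208 — 3 statements merged into one kernel-verified Lean document; each statement's English description precedes it below -/
import Mathlib

section
/- Let g₁, g₂ be positive integers with g₂/2 < g₁ < g₂, and let S be a numerical semigroup with E(S) = {g₁, g₂}. Then BPF(S) = {g₁, g₂}, where BPF(S) is the set of pseudo-Frobenius numbers of S that are greater than F(S)/2. -/
/-- A numerical semigroup: subset of ℕ closed under addition, containing 0, cofinite. -/
def IsNumericalSemigroup (S : Set ℕ) : Prop :=
  0 ∈ S ∧ (∀ a b, a ∈ S → b ∈ S → a + b ∈ S) ∧ Sᶜ.Finite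

/-- The set of special gaps E(S). -/
def specialGaps (S : Set ℕ) : Set ℕ :=
  {x | x ∉ S ∧ 2 * x ∈ S ∧ ∀ s ∈ S, s ≠ 0 → x + s ∈ S}

/-- `F` is the Frobenius number of `S`: the greatest natural number not in `S`. -/
def IsFrobenius (S : Set ℕ) (F : ℕ) : Prop :=
  F ∉ S ∧ ∀ m : ℕ, m ∉ S → m ≤ F

/-- Irreducible numerical semigroup. -/
def IsIrreducibleNS (S : Set ℕ) : Prop :=
  IsNumericalSemigroup S ∧ ∀ S₁ S₂ : Set ℕ, IsNumericalSemigroup S₁ →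
    IsNumericalSemigroup S₂ → S = S₁ ∩ S₂ → S = S₁ ∨ S = S₂

/-- Atomic numerical semigroup. -/
def IsAtomicNS (S : Set ℕ) : Prop :=
  IsNumericalSemigroup S ∧ ∀ (F : ℕ) (S₁ S₂ : Set ℕ), IsFrobenius S F →
    IsNumericalSemigroup S₁ → IsNumericalSemigroup S₂ →
    IsFrobenius S₁ F → IsFrobenius S₂ F → S = S₁ ∩ S₂ → S = S₁ ∨ S = S₂

/-- Pseudo-Frobenius numbers of `S`, as integers. -/
def pseudoFrob (S : Set ℕ) : Set ℤ :=
  {x | x ∉ (fun n : ℕ => (n : ℤ)) '' S ∧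
    ∀ s ∈ S, s ≠ 0 → x + (s : ℤ) ∈ (fun n : ℕ => (n : ℤ)) '' S}

/-- The semigroup C(F): 0 together with all naturals greater than F/2, except F. -/
def NSC (F : ℕ) : Set ℕ := insert 0 ({n : ℕ | F / 2 < n} \ {F})

/-- `x` is a minimal generator of `S`. -/
def IsMinGen (S : Set ℕ) (x : ℕ) : Prop :=
  x ∈ S ∧ x ≠ 0 ∧ ∀ a b, a ∈ S → b ∈ S → a ≠ 0 → b ≠ 0 → a + b ≠ x

/-!
Since `0 ∈ S`, the Frobenius number `F` is positive, so `2F` and every `F + s` exceed `F`; hence `F`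
is itself a special gap, necessarily the largest one, and `F = g₂`. A pseudo-Frobenius number `x`
with `F < 2x` is a natural number with `2x ∈ S`, i.e. a special gap; conversely every special gap is
pseudo-Frobenius. So `BPF(S)` consists of the special gaps `g` with `F < 2g`, which by
`g₂ < 2g₁` are both `g₁` and `g₂`.
-/

theorem natCast_mem_pseudoFrob_iff {S : Set ℕ} {n : ℕ} :
    (n : ℤ) ∈ pseudoFrob S ↔ n ∉ S ∧ ∀ s ∈ S, s ≠ 0 → n + s ∈ S := by
  simp only [pseudoFrob, Set.mem_ofPred_eq, Set.mem_image, ← Nat.cast_add, Nat.cast_inj,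
    exists_eq_right]

namespace IsFrobenius

variable {S : Set ℕ} {F : ℕ}

theorem mem_of_lt (hF : IsFrobenius S F) {n : ℕ} (hn : F < n) : n ∈ S :=
  by_contra fun h => (hF.2 n h).not_gt hn

theorem isGreatest_specialGaps (hF : IsFrobenius S F) (h0 : 0 ∈ S) :
    IsGreatest (specialGaps S) F := by
  have hF0 : F ≠ 0 := fun h => hF.1 (h ▸ h0)
  exact ⟨⟨hF.1, hF.mem_of_lt (by omega), fun s _ hs => hF.mem_of_lt (by omega)⟩,
    fun n hn => hF.2 n hn.1⟩

theorem pseudoFrob_gt_half_eq_specialGaps_gt_half (hF : IsFrobenius S F) :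
    {x ∈ pseudoFrob S | (F : ℤ) < 2 * x} =
      ((↑) '' specialGaps S : Set ℤ) ∩ {x | (F : ℤ) < 2 * x} := by
  ext x
  constructor
  · rintro ⟨hx, hFx⟩
    lift x to ℕ using (by omega)
    obtain ⟨hxS, hxs⟩ := natCast_mem_pseudoFrob_iff.1 hx
    exact ⟨⟨x, ⟨hxS, hF.mem_of_lt (by omega), hxs⟩, rfl⟩, hFx⟩
  · rintro ⟨⟨n, ⟨hnS, -, hns⟩, rfl⟩, hFx⟩
    exact ⟨natCast_mem_pseudoFrob_iff.2 ⟨hnS, hns⟩, hFx⟩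

end IsFrobenius

theorem stmt8_general (g₁ g₂ : ℕ) (h1 : g₂ < 2 * g₁) (h2 : g₁ < g₂)
    (S : Set ℕ) (hS : IsNumericalSemigroup S) (F : ℕ) (hF : IsFrobenius S F)
    (hE : specialGaps S = {g₁, g₂}) :
    {x ∈ pseudoFrob S | (F : ℤ) < 2 * x} = {(g₁ : ℤ), (g₂ : ℤ)} := by
  have hFg₂ : F = g₂ := by
    have hF' := hF.isGreatest_specialGaps hS.1
    rw [hE] at hF'
    simpa [max_eq_right h2.le] using hF'.unique isGreatest_pair
  rw [hF.pseudoFrob_gt_half_eq_specialGaps_gt_half, hE, Set.image_pair]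
  ext x
  simp only [Set.mem_inter_iff, Set.mem_insert_iff, Set.mem_singleton_iff, Set.mem_ofPred_eq]
  omega

theorem stmt8 (g₁ g₂ : ℕ) (h0 : 0 < g₁) (h1 : g₂ < 2 * g₁) (h2 : g₁ < g₂)
    (S : Set ℕ) (hS : IsNumericalSemigroup S) (F : ℕ) (hF : IsFrobenius S F)
    (hE : specialGaps S = {g₁, g₂}) :
    {x ∈ pseudoFrob S | (F : ℤ) < 2 * x} = {(g₁ : ℤ), (g₂ : ℤ)} :=
  stmt8_general g₁ g₂ h1 h2 S hS F hF hE
end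

section
/- Let g₁, g₂ be positive integers with g₂/2 < g₁ < g₂ and let S be a numerical semigroup. Then E(S) = {g₁, g₂} if and only if S is maximal (with respect to inclusion) among numerical semigroups disjoint from {g₁, g₂}, and g₂ − g₁ ∉ S. -/
/-! Adjoining a special gap to `S` gives again a numerical semigroup, and conversely the largest
element of `T \ S` for numerical semigroups `S ⊊ T` is a special gap of `S`. Hence `S` is maximal
among semigroups avoiding `{g₁, g₂}` exactly when `E(S) ⊆ {g₁, g₂}`. In that case the Frobenius
number, the largest gap, is itself a special gap and hence `g₂`, so `2 g₁ > g₂` lies in `S`. If `g₁`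
were not special, the largest `s ∈ S \ {0}` with `g₁ + s ∉ S` would make `g₁ + s` special, forcing
`g₁ + s = g₂`, i.e. `g₂ - g₁ ∈ S`. -/

namespace IsNumericalSemigroup

variable {S T : Set ℕ}

lemma insert_of_mem_specialGaps (hS : IsNumericalSemigroup S) {x : ℕ}
    (hx : x ∈ specialGaps S) : IsNumericalSemigroup (insert x S) := by
  obtain ⟨hxS, h2x, hadd⟩ := hx
  refine ⟨Or.inr hS.1, ?_, hS.2.2.subset (Set.compl_subset_compl.mpr (Set.subset_insert x S))⟩
  rintro a b (rfl | ha) (rfl | hb)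
  · exact Or.inr (by rwa [← two_mul])
  · rcases eq_or_ne b 0 with rfl | hb0
    · simp
    · exact Or.inr (hadd b hb hb0)
  · rcases eq_or_ne a 0 with rfl | ha0
    · simp
    · exact Or.inr (by rw [add_comm]; exact hadd a ha ha0)
  · exact Or.inr (hS.2.1 a b ha hb)

lemma exists_isGreatest_diff (hS : IsNumericalSemigroup S) (hTS : ¬T ⊆ S) :
    ∃ x, IsGreatest (T \ S) x :=
  (hS.2.2.subset fun _ hy => hy.2).bddAbove.exists_isGreatest_of_nonempty
    (Set.not_subset.mp hTS)

lemma mem_specialGaps_of_isGreatest_diff (hS : IsNumericalSemigroup S)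
    (hT : IsNumericalSemigroup T) (hST : S ⊆ T) {x : ℕ} (hx : IsGreatest (T \ S) x) :
    x ∈ specialGaps S := by
  obtain ⟨⟨hxT, hxS⟩, hmax⟩ := hx
  have hx0 : x ≠ 0 := fun h => hxS (h ▸ hS.1)
  have mem_of_lt {y : ℕ} (hyT : y ∈ T) (hxy : x < y) : y ∈ S := by
    by_contra hyS
    exact absurd (hmax ⟨hyT, hyS⟩) (not_le.mpr hxy)
  refine ⟨hxS, mem_of_lt (two_mul x ▸ hT.2.1 x x hxT hxT) (by omega), fun s hs hs0 => ?_⟩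
  exact mem_of_lt (hT.2.1 x s hxT (hST hs)) (by omega)

lemma forall_eq_of_disjoint_iff_specialGaps_subset (hS : IsNumericalSemigroup S) {H : Set ℕ}
    (hHS : Disjoint H S) :
    (∀ T, IsNumericalSemigroup T → Disjoint H T → S ⊆ T → S = T) ↔ specialGaps S ⊆ H := by
  constructor
  · intro hmax x hx
    by_contra hxH
    have hHx : Disjoint H (insert x S) := Set.disjoint_insert_right.mpr ⟨hxH, hHS⟩
    have hSx := hmax _ (hS.insert_of_mem_specialGaps hx) hHx (Set.subset_insert x S)
    exact hx.1 (hSx ▸ Set.mem_insert x S)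
  · intro hE T hT hHT hST
    by_contra hne
    obtain ⟨x, hx⟩ := hS.exists_isGreatest_diff fun hTS => hne (hST.antisymm hTS)
    exact Set.disjoint_left.mp hHT (hE (hS.mem_specialGaps_of_isGreatest_diff hT hST hx)) hx.1.1

lemma exists_isGreatest_compl_mem_specialGaps (hS : IsNumericalSemigroup S) {y : ℕ}
    (hy : y ∉ S) : ∃ F, IsGreatest Sᶜ F ∧ F ∈ specialGaps S := by
  have hUniv : IsNumericalSemigroup Set.univ := ⟨trivial, fun _ _ _ _ => trivial, by simp⟩
  obtain ⟨F, hF⟩ := hS.exists_isGreatest_diff (T := Set.univ) fun h => hy (h trivial)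
  refine ⟨F, Set.compl_eq_univ_sdiff S ▸ hF, ?_⟩
  exact hS.mem_specialGaps_of_isGreatest_diff hUniv (Set.subset_univ S) hF

/-- Take `s` largest with `x + s ∉ S`; then `2 (x + s) = 2x + 2s ∈ S`. -/
lemma exists_add_mem_specialGaps (hS : IsNumericalSemigroup S) {x s₀ : ℕ} (h2x : 2 * x ∈ S)
    (hs₀ : s₀ ∈ S) (hs₀0 : s₀ ≠ 0) (hxs₀ : x + s₀ ∉ S) :
    ∃ s ∈ S, s ≠ 0 ∧ x + s ∈ specialGaps S := by
  set A := {s | s ∈ S ∧ s ≠ 0 ∧ x + s ∉ S}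
  have hA : A.Finite :=
    (hS.2.2.preimage (add_right_injective x).injOn).subset fun _ hs => hs.2.2
  obtain ⟨s, ⟨hsS, hs0, hxs⟩, hmax⟩ :=
    hA.bddAbove.exists_isGreatest_of_nonempty ⟨s₀, hs₀, hs₀0, hxs₀⟩
  refine ⟨s, hsS, hs0, hxs, ?_, fun t ht ht0 => ?_⟩
  · have h2s : 2 * x + 2 * s ∈ S := hS.2.1 _ _ h2x (two_mul s ▸ hS.2.1 s s hsS hsS)
    rwa [mul_add]
  · by_contra hxst
    have := hmax ⟨hS.2.1 s t hsS ht, by omega, by rwa [← add_assoc]⟩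
    omega

lemma mem_specialGaps_of_specialGaps_subset_pair (hS : IsNumericalSemigroup S) {x y : ℕ}
    (hE : specialGaps S ⊆ {x, y}) (hxS : x ∉ S) (h2x : 2 * x ∈ S) (hyx : y - x ∉ S) :
    x ∈ specialGaps S := by
  refine ⟨hxS, h2x, fun s₀ hs₀ hs₀0 => ?_⟩
  by_contra hxs₀
  obtain ⟨s, hsS, hs0, hsE⟩ := hS.exists_add_mem_specialGaps h2x hs₀ hs₀0 hxs₀
  rcases hE hsE with h | (h : x + s = y)
  · omega
  · exact hyx ((by omega : s = y - x) ▸ hsS)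

end IsNumericalSemigroup

open IsNumericalSemigroup

theorem stmt11_general (g₁ g₂ : ℕ) (h1 : g₂ < 2 * g₁) (h2 : g₁ < g₂)
    (S : Set ℕ) (hS : IsNumericalSemigroup S) :
    specialGaps S = {g₁, g₂} ↔
    (g₁ ∉ S ∧ g₂ ∉ S ∧
      (∀ T : Set ℕ, IsNumericalSemigroup T → g₁ ∉ T → g₂ ∉ T → S ⊆ T → S = T) ∧
      g₂ - g₁ ∉ S) := by
  have hdisj (T : Set ℕ) : Disjoint {g₁, g₂} T ↔ g₁ ∉ T ∧ g₂ ∉ T := by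
    simp [Set.disjoint_insert_left]
  have hmax (h₁ : g₁ ∉ S) (h₂ : g₂ ∉ S) :
      (∀ T, IsNumericalSemigroup T → g₁ ∉ T → g₂ ∉ T → S ⊆ T → S = T) ↔
        specialGaps S ⊆ {g₁, g₂} := by
    rw [← hS.forall_eq_of_disjoint_iff_specialGaps_subset ((hdisj S).mpr ⟨h₁, h₂⟩)]
    simp only [hdisj, and_imp]
  have hg₁_add : g₁ + (g₂ - g₁) = g₂ := by omega
  constructor
  · intro hE
    have hg₁E : g₁ ∈ specialGaps S := hE ▸ Or.inl rfl
    have hg₂S : g₂ ∉ S := (hE ▸ Or.inr rfl : g₂ ∈ specialGaps S).1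
    refine ⟨hg₁E.1, hg₂S, (hmax hg₁E.1 hg₂S).mpr hE.subset, fun hd => hg₂S ?_⟩
    exact hg₁_add ▸ hg₁E.2.2 _ hd (by omega)
  · rintro ⟨hg₁S, hg₂S, hS_max, hdS⟩
    have hE := (hmax hg₁S hg₂S).mp hS_max
    obtain ⟨F, ⟨-, hFmax⟩, hFE⟩ := hS.exists_isGreatest_compl_mem_specialGaps hg₂S
    have hF : F = g₂ := by
      have := hFmax hg₂S
      rcases hE hFE with rfl | rfl <;> omega
    have h2g₁ : 2 * g₁ ∈ S := by
      by_contra h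
      have := hFmax h
      omega
    have hg₁E := hS.mem_specialGaps_of_specialGaps_subset_pair hE hg₁S h2g₁ hdS
    exact hE.antisymm (Set.insert_subset hg₁E (Set.singleton_subset_iff.mpr (hF ▸ hFE)))

theorem stmt11 (g₁ g₂ : ℕ) (h0 : 0 < g₁) (h1 : g₂ < 2 * g₁) (h2 : g₁ < g₂)
    (S : Set ℕ) (hS : IsNumericalSemigroup S) :
    specialGaps S = {g₁, g₂} ↔
    (g₁ ∉ S ∧ g₂ ∉ S ∧
      (∀ T : Set ℕ, IsNumericalSemigroup T → g₁ ∉ T → g₂ ∉ T → S ⊆ T → S = T) ∧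
      g₂ - g₁ ∉ S) :=
  stmt11_general g₁ g₂ h1 h2 S hS
end

section
/- Let g₁, g₂ be positive integers with g₂/2 < g₁ < g₂ and let S be a numerical semigroup with E(S) = {g₁, g₂}. Then there exist irreducible numerical semigroups S₁ and S₂ with Frobenius numbers g₁ and g₂ respectively such that S = S₁ ∩ S₂. -/
/-!
Every gap `g ∉ S` is the Frobenius number of `S ∪ (g, ∞)`, and adjoining to a numerical semigroup
one of its special gaps other than `g` again gives a numerical semigroup with Frobenius number `g`.
This can be iterated until `g` is the only special gap left, and a numerical semigroup with a single
special gap is irreducible. So each `gᵢ ∈ E(S)` yields an irreducible `Sᵢ ⊇ S` with Frobenius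
number `gᵢ`. If
`S₁ ∩ S₂` were larger than `S`, the largest element of `(S₁ ∩ S₂) \ S` would be a special gap of `S`,
that is `g₁` or `g₂`; but `g₁ ∉ S₁` and `g₂ ∉ S₂`.
-/

lemma IsNumericalSemigroup.inter {A B : Set ℕ} (hA : IsNumericalSemigroup A)
    (hB : IsNumericalSemigroup B) : IsNumericalSemigroup (A ∩ B) := by
  refine ⟨⟨hA.1, hB.1⟩, fun a b ha hb => ⟨hA.2.1 a b ha.1 hb.1, hB.2.1 a b ha.2 hb.2⟩, ?_⟩
  rw [Set.compl_inter]
  exact hA.2.2.union hB.2.2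

lemma IsNumericalSemigroup.union_Ioi {S : Set ℕ} (hS : IsNumericalSemigroup S) (g : ℕ) :
    IsNumericalSemigroup (S ∪ Set.Ioi g) := by
  refine ⟨Or.inl hS.1, ?_, (Set.finite_Iic g).subset fun a ha => ?_⟩
  · rintro a b (ha | ha) (hb | hb)
    · exact Or.inl (hS.2.1 a b ha hb)
    all_goals right; simp only [Set.mem_Ioi] at *; omega
  · simp only [Set.mem_compl_iff, Set.mem_union, Set.mem_Ioi, not_or, not_lt] at ha
    exact ha.2

lemma isFrobenius_union_Ioi {S : Set ℕ} {g : ℕ} (hg : g ∉ S) :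
    IsFrobenius (S ∪ Set.Ioi g) g := by
  refine ⟨fun h => h.elim hg (lt_irrefl g), fun m hm => ?_⟩
  simp only [Set.mem_union, Set.mem_Ioi, not_or, not_lt] at hm
  exact hm.2

lemma IsNumericalSemigroup.insert_of_mem_specialGaps_s12 {S : Set ℕ} (hS : IsNumericalSemigroup S)
    {x : ℕ} (hx : x ∈ specialGaps S) : IsNumericalSemigroup (insert x S) := by
  obtain ⟨-, h2x, hadd⟩ := hx
  refine ⟨Set.mem_insert_of_mem _ hS.1, ?_, hS.2.2.subset fun a ha h => ha (Or.inr h)⟩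
  rintro a b (rfl | ha) (rfl | hb)
  · exact Or.inr (by rwa [← two_mul])
  · rcases eq_or_ne b 0 with rfl | hb0
    · exact Or.inl rfl
    · exact Or.inr (hadd b hb hb0)
  · rcases eq_or_ne a 0 with rfl | ha0
    · simp
    · exact Or.inr (by rw [add_comm]; exact hadd a ha ha0)
  · exact Or.inr (hS.2.1 a b ha hb)

/-- The largest element of `A \ S` is a special gap of `S`. -/
lemma exists_mem_specialGaps_of_not_subset {S A : Set ℕ} (hS : IsNumericalSemigroup S)
    (hA : ∀ a b, a ∈ A → b ∈ A → a + b ∈ A) (hSA : S ⊆ A) (hAS : ¬ A ⊆ S) :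
    ∃ x ∈ specialGaps S, x ∈ A := by
  have hfin : (A \ S).Finite := hS.2.2.subset fun _ hx => hx.2
  obtain ⟨x, ⟨hxA, hxS⟩, hmax⟩ :=
    hfin.exists_maximalFor id _ (Set.not_subset.mp hAS)
  have hx0 : x ≠ 0 := fun h => hxS (h ▸ hS.1)
  have not_mem_diff : ∀ y, x < y → y ∉ A \ S := fun y hxy hy =>
    (hmax hy hxy.le).not_gt hxy
  refine ⟨x, ⟨hxS, ?_, fun s hs hs0 => ?_⟩, hxA⟩
  · by_contra h2x
    exact not_mem_diff (2 * x) (by omega) ⟨two_mul x ▸ hA x x hxA hxA, h2x⟩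
  · by_contra hxs
    exact not_mem_diff (x + s) (by omega) ⟨hA x s hxA (hSA hs), hxs⟩

lemma isIrreducibleNS_of_specialGaps_subset_singleton {S : Set ℕ} (hS : IsNumericalSemigroup S)
    {g : ℕ} (hg : g ∉ S) (hE : specialGaps S ⊆ {g}) : IsIrreducibleNS S := by
  refine ⟨hS, fun A B hA hB hSAB => ?_⟩
  by_contra! hne
  have hg_mem {C : Set ℕ} (hC : IsNumericalSemigroup C) (hSC : S ⊆ C) (hCS : S ≠ C) : g ∈ C := by
    obtain ⟨x, hx, hxC⟩ := exists_mem_specialGaps_of_not_subset hS hC.2.1 hSC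
      fun h => hCS (hSC.antisymm h)
    rwa [← hE hx]
  have hSA : S ⊆ A := hSAB ▸ Set.inter_subset_left
  have hSB : S ⊆ B := hSAB ▸ Set.inter_subset_right
  exact hg (hSAB ▸ ⟨hg_mem hA hSA hne.1, hg_mem hB hSB hne.2⟩)

lemma exists_isIrreducibleNS_superset {T : Set ℕ} {g : ℕ} (hT : IsNumericalSemigroup T)
    (hF : IsFrobenius T g) : ∃ S, IsIrreducibleNS S ∧ IsFrobenius S g ∧ T ⊆ S := by
  induction h : Tᶜ.ncard using Nat.strong_induction_on generalizing T with
  | _ n ih =>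
  by_cases hE : specialGaps T ⊆ {g}
  · exact ⟨T, isIrreducibleNS_of_specialGaps_subset_singleton hT hF.1 hE, hF, subset_rfl⟩
  obtain ⟨x, hx, hxg⟩ := Set.not_subset.mp hE
  have hxg : x ≠ g := hxg
  have hF' : IsFrobenius (insert x T) g :=
    ⟨fun h => h.elim (hxg ·.symm) hF.1, fun m hm => hF.2 m fun h => hm (Or.inr h)⟩
  have hlt : (insert x T)ᶜ.ncard < n := h ▸ Set.ncard_lt_ncard
    ⟨fun a ha h => ha (Or.inr h), fun h => h hx.1 (Or.inl rfl)⟩ hT.2.2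
  obtain ⟨S, hSirr, hSF, hxTS⟩ := ih _ hlt (hT.insert_of_mem_specialGaps_s12 hx) hF' rfl
  exact ⟨S, hSirr, hSF, (Set.subset_insert x T).trans hxTS⟩

lemma exists_isIrreducibleNS_superset_of_not_mem {S : Set ℕ} (hS : IsNumericalSemigroup S)
    {g : ℕ} (hg : g ∉ S) : ∃ S', IsIrreducibleNS S' ∧ IsFrobenius S' g ∧ S ⊆ S' := by
  obtain ⟨S', hirr, hF, hsub⟩ :=
    exists_isIrreducibleNS_superset (hS.union_Ioi g) (isFrobenius_union_Ioi hg)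
  exact ⟨S', hirr, hF, Set.subset_union_left.trans hsub⟩

theorem stmt12_general (g₁ g₂ : ℕ)
    (S : Set ℕ) (hS : IsNumericalSemigroup S) (hE : specialGaps S = {g₁, g₂}) :
    ∃ S₁ S₂ : Set ℕ, IsIrreducibleNS S₁ ∧ IsFrobenius S₁ g₁ ∧
      IsIrreducibleNS S₂ ∧ IsFrobenius S₂ g₂ ∧ S = S₁ ∩ S₂ := by
  have hg₁ : g₁ ∈ specialGaps S := hE ▸ Set.mem_insert _ _
  have hg₂ : g₂ ∈ specialGaps S := hE ▸ Set.mem_insert_of_mem _ rfl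
  obtain ⟨S₁, hS₁, hF₁, hSS₁⟩ := exists_isIrreducibleNS_superset_of_not_mem hS hg₁.1
  obtain ⟨S₂, hS₂, hF₂, hSS₂⟩ := exists_isIrreducibleNS_superset_of_not_mem hS hg₂.1
  refine ⟨S₁, S₂, hS₁, hF₁, hS₂, hF₂, (Set.subset_inter hSS₁ hSS₂).antisymm ?_⟩
  by_contra hne
  obtain ⟨x, hx, hxS₁, hxS₂⟩ := exists_mem_specialGaps_of_not_subset hS
    (hS₁.1.inter hS₂.1).2.1 (Set.subset_inter hSS₁ hSS₂) hne
  rw [hE] at hx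
  rcases hx with rfl | rfl
  · exact hF₁.1 hxS₁
  · exact hF₂.1 hxS₂

theorem stmt12 (g₁ g₂ : ℕ) (h0 : 0 < g₁) (h1 : g₂ < 2 * g₁) (h2 : g₁ < g₂)
    (S : Set ℕ) (hS : IsNumericalSemigroup S) (hE : specialGaps S = {g₁, g₂}) :
    ∃ S₁ S₂ : Set ℕ, IsIrreducibleNS S₁ ∧ IsFrobenius S₁ g₁ ∧
      IsIrreducibleNS S₂ ∧ IsFrobenius S₂ g₂ ∧ S = S₁ ∩ S₂ :=
  stmt12_general g₁ g₂ S hS hE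
end
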